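/- Let A be an abelian category, let t₁ = (T₁,F₁) and t₂ = (T₂,F₂) be torsion pairs in A with T₁ ⊆ T₂, and set H = T₂ ∩ F₁. Then the maps Φ(T,F) = (T ∩ F₁, T₂ ∩ F) and Ψ(X,Y) = (T₁∗X, Y∗F₂) are mutually inverse, order-preserving bijections between the set of torsion pairs (T,F) in A with T₁ ⊆ T ⊆ T₂ (ordered by inclusion of the first components) and the set of torsion pairs in H (ordered by inclusion of the first components). Here T₁∗X is the class of objects M admitting a short exact sequence 0 → U → M → X → 0 with U ∈ T₁ and X ∈ X, and Y∗F₂ is the class of objects M admitting a short exact sequence 0 → Y → M → V → 0 with Y ∈ Y and V ∈ F₂. -/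

import Mathlib

open CategoryTheory Limits

universe v u

variable (A : Type u) [Category.{v} A] [Abelian A]

/-- A class of objects closed under isomorphisms. -/
def IsoClosed (S : Set A) : Prop := ∀ ⦃X Y : A⦄, (X ≅ Y) → X ∈ S → Y ∈ S

/-- `f`, `g` form a short exact sequence `0 → X → Y → Z → 0`. -/
def IsSES {X Y Z : A} (f : X ⟶ Y) (g : Y ⟶ Z) : Prop :=
  ∃ w : f ≫ g = 0, (ShortComplex.mk f g w).ShortExact

/-- A torsion pair in the abelian category `A`: a pair of iso-closed classes with
`Hom(T, F) = 0` such that every object sits in a short exact sequence with kernel in `T`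
and cokernel in `F`. -/
def IsTorsionPair (T F : Set A) : Prop :=
  IsoClosed A T ∧ IsoClosed A F ∧
  (∀ X ∈ T, ∀ Y ∈ F, ∀ f : X ⟶ Y, f = 0) ∧
  (∀ M : A, ∃ (X Y : A) (f : X ⟶ M) (g : M ⟶ Y), IsSES A f g ∧ X ∈ T ∧ Y ∈ F)

/-- `star X Y` is the class of objects `M` admitting a short exact sequence
`0 → B → M → C → 0` with `B ∈ X` and `C ∈ Y`. -/
def star (X Y : Set A) : Set A :=
  {M : A | ∃ (B C : A) (f : B ⟶ M) (g : M ⟶ C), IsSES A f g ∧ B ∈ X ∧ C ∈ Y}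

/-- A torsion pair in a class `H` of objects of `A`: a pair of iso-closed subclasses
`(X, Y)` of `H` such that `Hom(X, Y) = 0` and every object of `H` sits in a short exact
sequence with kernel in `X` and cokernel in `Y`. -/
def IsTorsionPairIn (H X Y : Set A) : Prop :=
  X ⊆ H ∧ Y ⊆ H ∧ IsoClosed A X ∧ IsoClosed A Y ∧
  (∀ B ∈ X, ∀ C ∈ Y, ∀ f : B ⟶ C, f = 0) ∧
  (∀ H₀ ∈ H, ∃ (B C : A) (f : B ⟶ H₀) (g : H₀ ⟶ C),
    IsSES A f g ∧ B ∈ X ∧ C ∈ Y)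

variable {A}

open ZeroObject

/-!
A torsion class is the left orthogonal of its torsion-free class and vice versa, so both are
closed under extensions, and `T₁ ⊆ T₂` forces `F₂ ⊆ F₁`. This makes the two composites `Ψ ∘ Φ`
and `Φ ∘ Ψ` identities by a direct look at the defining short exact sequences. The one real
construction is the `Ψ(X, Y)`-decomposition of an object `M`: take the `t₂`-sequence
`0 → T → M → V → 0`, the `t₁`-sequence `0 → U → T → W → 0` and the `(X, Y)`-sequence
`0 → X₀ → W → Y₀ → 0` of `W ∈ H`. With `a : T → W`, `b : W → Y₀`, the kernel-cokernel sequence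
of a composite (a form of the snake lemma) puts `P = ker (a ≫ b)` between `U` and `X₀`, and
`M / P` between `T / P ≅ Y₀` and `M / T ≅ V`.
-/

namespace IsSES

variable {X Y Z W : A} {f : X ⟶ Y} {g : Y ⟶ Z}

lemma w (h : IsSES A f g) : f ≫ g = 0 := h.1

lemma shortExact (h : IsSES A f g) : (ShortComplex.mk f g h.w).ShortExact := h.2

lemma mono (h : IsSES A f g) : Mono f := h.shortExact.mono_f

lemma epi (h : IsSES A f g) : Epi g := h.shortExact.epi_g

lemma exists_desc (h : IsSES A f g) (φ : Y ⟶ W) (hφ : f ≫ φ = 0) :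
    ∃ χ : Z ⟶ W, g ≫ χ = φ :=
  have := h.epi
  h.shortExact.exact.desc' φ hφ

lemma exists_lift (h : IsSES A f g) (φ : W ⟶ Y) (hφ : φ ≫ g = 0) :
    ∃ ψ : W ⟶ X, ψ ≫ f = φ :=
  have := h.mono
  h.shortExact.exact.lift' φ hφ

lemma isIso_right_of_left_eq_zero (h : IsSES A f g) (hf : f = 0) : IsIso g :=
  have := h.shortExact.exact.mono_g hf
  have := h.epi
  isIso_of_mono_of_epi g

lemma isIso_left_of_right_eq_zero (h : IsSES A f g) (hg : g = 0) : IsIso f :=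
  have := h.shortExact.exact.epi_f hg
  have := h.mono
  isIso_of_mono_of_epi f

lemma comp_iso_hom {Y' : A} (h : IsSES A f g) (e : Y ≅ Y') :
    IsSES A (f ≫ e.hom) (e.inv ≫ g) :=
  ⟨by simp [h.w], ShortComplex.shortExact_of_iso
    (ShortComplex.isoMk (Iso.refl X) e (Iso.refl Z) (by simp) (by simp)) h.shortExact⟩

lemma kernel_mem {S : Set A} (hS : IsoClosed A S) (h : IsSES A f g) (hX : X ∈ S) :
    kernel g ∈ S :=
  have := h.mono
  hS (h.shortExact.exact.fIsKernel.conePointUniqueUpToIso (limit.isLimit _)) hX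

lemma cokernel_mem {S : Set A} (hS : IsoClosed A S) (h : IsSES A f g) (hZ : Z ∈ S) :
    cokernel f ∈ S :=
  have := h.epi
  hS (h.shortExact.exact.gIsCokernel.coconePointUniqueUpToIso (colimit.isColimit _)) hZ

end IsSES

section ShortExactSequences

variable {X Y Z : A}

lemma isSES_kernel (g : Y ⟶ Z) [Epi g] : IsSES A (kernel.ι g) g :=
  ⟨kernel.condition g, ShortComplex.ShortExact.mk'
    (ShortComplex.exact_of_f_is_kernel _ (kernelIsKernel g)) inferInstance inferInstance⟩

lemma isSES_cokernel (f : X ⟶ Y) [Mono f] : IsSES A f (cokernel.π f) :=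
  ⟨cokernel.condition f, ShortComplex.ShortExact.mk'
    (ShortComplex.exact_of_g_is_cokernel _ (cokernelIsCokernel f)) inferInstance inferInstance⟩

lemma isSES_id_zero (X : A) : IsSES A (𝟙 X) (0 : X ⟶ 0) :=
  ⟨by simp, ShortComplex.Splitting.shortExact
    { r := 𝟙 X, s := 0, s_g := (isZero_zero A).eq_of_src _ _ }⟩

lemma isSES_zero_id (X : A) : IsSES A (0 : 0 ⟶ X) (𝟙 X) :=
  ⟨by simp, ShortComplex.Splitting.shortExact
    { r := 0, s := 𝟙 X, f_r := (isZero_zero A).eq_of_src _ _ }⟩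

lemma isSES_kernel_map_comp (f : X ⟶ Y) (g : Y ⟶ Z) [Epi f] :
    IsSES A (kernel.map f (f ≫ g) (𝟙 _) g (by simp)) (kernel.map (f ≫ g) g f (𝟙 _) (by simp)) := by
  have hE := kernelCokernelCompSequence_exact f g
  have hδ : kernelCokernelCompSequence.δ f g = 0 := by
    rw [kernelCokernelCompSequence.δ_fac, cokernel.π_of_epi, comp_zero, neg_zero]
  have : Mono (kernel.map f (f ≫ g) (𝟙 _) g (by simp)) := mono_of_mono_fac (kernel.lift_ι _ _ _)
  have : Epi (kernel.map (f ≫ g) g f (𝟙 _) (by simp)) := (hE.exact 1).epi_f hδ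
  exact ⟨by ext; simp, ⟨hE.exact 0⟩⟩

lemma isSES_cokernel_map_comp (f : X ⟶ Y) (g : Y ⟶ Z) [Mono g] :
    IsSES A (cokernel.map f (f ≫ g) (𝟙 _) g (by simp))
      (cokernel.map (f ≫ g) g f (𝟙 _) (by simp)) := by
  have hE := kernelCokernelCompSequence_exact f g
  have hδ : kernelCokernelCompSequence.δ f g = 0 := by
    rw [kernelCokernelCompSequence.δ_fac, kernel.ι_of_mono, zero_comp, neg_zero]
  have : Mono (cokernel.map f (f ≫ g) (𝟙 _) g (by simp)) := (hE.exact 2).mono_g hδ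
  have : Epi (cokernel.map (f ≫ g) g f (𝟙 _) (by simp)) := epi_of_epi_fac (cokernel.π_desc _ _ _)
  exact ⟨by ext; simp, ⟨hE.exact 3⟩⟩

end ShortExactSequences

section Star

variable {S S' R R' : Set A}

lemma isoClosed_star : IsoClosed A (star A S S') := by
  rintro M M' e ⟨B, C, f, g, h, hB, hC⟩
  exact ⟨B, C, f ≫ e.hom, e.inv ≫ g, h.comp_iso_hom e, hB, hC⟩

lemma star_mono (hS : S ⊆ R) (hS' : S' ⊆ R') : star A S S' ⊆ star A R R' := by
  rintro M ⟨B, C, f, g, h, hB, hC⟩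
  exact ⟨B, C, f, g, h, hS hB, hS' hC⟩

lemma subset_star_left (h0 : (0 : A) ∈ S') : S ⊆ star A S S' :=
  fun M hM => ⟨M, 0, 𝟙 M, 0, isSES_id_zero M, hM, h0⟩

lemma subset_star_right (h0 : (0 : A) ∈ S) : S' ⊆ star A S S' :=
  fun M hM => ⟨0, M, 0, 𝟙 M, isSES_zero_id M, h0, hM⟩

lemma kernel_comp_mem_star {X Y Z : A} (f : X ⟶ Y) (g : Y ⟶ Z) [Epi f]
    (hf : kernel f ∈ S) (hg : kernel g ∈ S') : kernel (f ≫ g) ∈ star A S S' :=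
  ⟨_, _, _, _, isSES_kernel_map_comp f g, hf, hg⟩

lemma cokernel_comp_mem_star {X Y Z : A} (f : X ⟶ Y) (g : Y ⟶ Z) [Mono g]
    (hf : cokernel f ∈ S) (hg : cokernel g ∈ S') : cokernel (f ≫ g) ∈ star A S S' :=
  ⟨_, _, _, _, isSES_cokernel_map_comp f g, hf, hg⟩

end Star

variable (A) in
def Orthogonal (S S' : Set A) : Prop := ∀ X ∈ S, ∀ Y ∈ S', ∀ f : X ⟶ Y, f = 0

namespace Orthogonal

variable {S S' R R' : Set A}

lemma mono (h : Orthogonal A S S') (hR : R ⊆ S) (hR' : R' ⊆ S') : Orthogonal A R R' :=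
  fun X hX Y hY => h X (hR hX) Y (hR' hY)

lemma star_left (h : Orthogonal A S R) (h' : Orthogonal A S' R) :
    Orthogonal A (star A S S') R := by
  rintro M ⟨B, C, f, g, hfg, hB, hC⟩ Y hY φ
  obtain ⟨χ, rfl⟩ := hfg.exists_desc φ (h B hB Y hY _)
  rw [h' C hC Y hY χ, comp_zero]

lemma star_right (h : Orthogonal A R S) (h' : Orthogonal A R S') :
    Orthogonal A R (star A S S') := by
  rintro X hX M ⟨B, C, f, g, hfg, hB, hC⟩ φ
  obtain ⟨ψ, rfl⟩ := hfg.exists_lift φ (h' X hX C hC _)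
  rw [h X hX B hB ψ, zero_comp]

end Orthogonal

namespace IsTorsionPair

variable {T F : Set A}

lemma isoClosed_left (h : IsTorsionPair A T F) : IsoClosed A T := h.1

lemma isoClosed_right (h : IsTorsionPair A T F) : IsoClosed A F := h.2.1

lemma orthogonal (h : IsTorsionPair A T F) : Orthogonal A T F := h.2.2.1

lemma exists_isSES (h : IsTorsionPair A T F) (M : A) :
    ∃ (X Y : A) (f : X ⟶ M) (g : M ⟶ Y), IsSES A f g ∧ X ∈ T ∧ Y ∈ F :=
  h.2.2.2 M

lemma mem_left_of_forall (h : IsTorsionPair A T F) {M : A}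
    (hM : ∀ Y ∈ F, ∀ f : M ⟶ Y, f = 0) : M ∈ T := by
  obtain ⟨X, Y, f, g, hfg, hX, hY⟩ := h.exists_isSES M
  have := hfg.isIso_left_of_right_eq_zero (hM Y hY g)
  exact h.isoClosed_left (asIso f) hX

lemma mem_right_of_forall (h : IsTorsionPair A T F) {M : A}
    (hM : ∀ X ∈ T, ∀ f : X ⟶ M, f = 0) : M ∈ F := by
  obtain ⟨X, Y, f, g, hfg, hX, hY⟩ := h.exists_isSES M
  have := hfg.isIso_right_of_left_eq_zero (hM X hX f)
  exact h.isoClosed_right (asIso g).symm hY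

lemma subset_left_of_orthogonal (h : IsTorsionPair A T F) {S : Set A}
    (hS : Orthogonal A S F) : S ⊆ T :=
  fun _ hM => h.mem_left_of_forall (hS _ hM)

lemma subset_right_of_orthogonal (h : IsTorsionPair A T F) {S : Set A}
    (hS : Orthogonal A T S) : S ⊆ F :=
  fun _ hM => h.mem_right_of_forall (fun X hX => hS X hX _ hM)

lemma zero_mem_left (h : IsTorsionPair A T F) : (0 : A) ∈ T :=
  h.mem_left_of_forall fun _ _ _ => (isZero_zero A).eq_of_src _ _

lemma zero_mem_right (h : IsTorsionPair A T F) : (0 : A) ∈ F :=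
  h.mem_right_of_forall fun _ _ _ => (isZero_zero A).eq_of_tgt _ _

lemma mem_left_of_epi (h : IsTorsionPair A T F) {M N : A} (e : M ⟶ N) [Epi e]
    (hM : M ∈ T) : N ∈ T :=
  h.mem_left_of_forall fun Y hY f => by
    rw [← cancel_epi e, comp_zero]
    exact h.orthogonal M hM Y hY _

lemma mem_right_of_mono (h : IsTorsionPair A T F) {M N : A} (m : M ⟶ N) [Mono m]
    (hN : N ∈ F) : M ∈ F :=
  h.mem_right_of_forall fun X hX f => by
    rw [← cancel_mono m, zero_comp]
    exact h.orthogonal X hX N hN _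

lemma star_subset_left (h : IsTorsionPair A T F) {S S' : Set A} (hS : S ⊆ T) (hS' : S' ⊆ T) :
    star A S S' ⊆ T :=
  h.subset_left_of_orthogonal
    ((h.orthogonal.mono hS subset_rfl).star_left (h.orthogonal.mono hS' subset_rfl))

lemma star_subset_right (h : IsTorsionPair A T F) {S S' : Set A} (hS : S ⊆ F) (hS' : S' ⊆ F) :
    star A S S' ⊆ F :=
  h.subset_right_of_orthogonal
    ((h.orthogonal.mono subset_rfl hS).star_right (h.orthogonal.mono subset_rfl hS'))

end IsTorsionPair

lemma IsTorsionPairIn.zero_mem_left {H X Y : Set A} (h : IsTorsionPairIn A H X Y)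
    (h0 : (0 : A) ∈ H) : (0 : A) ∈ X := by
  obtain ⟨-, -, hX, -, -, hdec⟩ := h
  obtain ⟨B, C, f, g, hfg, hB, -⟩ := hdec 0 h0
  have := hfg.mono
  exact hX (IsZero.of_mono f (isZero_zero A)).isoZero hB

namespace IsTorsionPair

variable {T₁ F₁ T₂ F₂ T F X Y : Set A}

lemma isTorsionPairIn_inter (h : IsTorsionPair A T F) (h₁ : IsTorsionPair A T₁ F₁)
    (h₂ : IsTorsionPair A T₂ F₂) (h₁T : T₁ ⊆ T) (hT₂ : T ⊆ T₂) :
    IsTorsionPairIn A (T₂ ∩ F₁) (T ∩ F₁) (T₂ ∩ F) := by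
  have hF : F ⊆ F₁ := h₁.subset_right_of_orthogonal (h.orthogonal.mono h₁T subset_rfl)
  refine ⟨Set.inter_subset_inter_left _ hT₂, Set.inter_subset_inter_right _ hF,
    fun _ _ e hM => ⟨h.isoClosed_left e hM.1, h₁.isoClosed_right e hM.2⟩,
    fun _ _ e hM => ⟨h₂.isoClosed_left e hM.1, h.isoClosed_right e hM.2⟩,
    h.orthogonal.mono Set.inter_subset_left Set.inter_subset_right, fun M hM => ?_⟩
  obtain ⟨B, C, f, g, hfg, hB, hC⟩ := h.exists_isSES M
  have := hfg.mono
  have := hfg.epi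
  exact ⟨B, C, f, g, hfg, ⟨hB, h₁.mem_right_of_mono f hM.2⟩, ⟨h₂.mem_left_of_epi g hM.1, hC⟩⟩

lemma star_inter_eq_left (h : IsTorsionPair A T F) (h₁ : IsTorsionPair A T₁ F₁)
    (h₁T : T₁ ⊆ T) : star A T₁ (T ∩ F₁) = T := by
  refine subset_antisymm (h.star_subset_left h₁T Set.inter_subset_left) fun M hM => ?_
  obtain ⟨U, W, u, a, hua, hU, hW⟩ := h₁.exists_isSES M
  have := hua.epi
  exact ⟨U, W, u, a, hua, hU, h.mem_left_of_epi a hM, hW⟩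

lemma star_inter_eq_right (h : IsTorsionPair A T F) (h₂ : IsTorsionPair A T₂ F₂)
    (hT₂ : T ⊆ T₂) : star A (T₂ ∩ F) F₂ = F := by
  have hF₂ : F₂ ⊆ F := h.subset_right_of_orthogonal (h₂.orthogonal.mono hT₂ subset_rfl)
  refine subset_antisymm (h.star_subset_right Set.inter_subset_right hF₂) fun M hM => ?_
  obtain ⟨T', V, k, g, hkg, hT', hV⟩ := h₂.exists_isSES M
  have := hkg.mono
  exact ⟨T', V, k, g, hkg, ⟨hT', h.mem_right_of_mono k hM⟩, hV⟩

lemma star_inter_eq_of_subset_right (h : IsTorsionPair A T F) (hX : IsoClosed A X)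
    (hXF : X ⊆ F) : star A T X ∩ F = X := by
  refine subset_antisymm ?_ fun M hM => ⟨subset_star_right h.zero_mem_left hM, hXF hM⟩
  rintro M ⟨⟨U, X₀, f, g, hfg, hU, hX₀⟩, hM⟩
  have := hfg.isIso_right_of_left_eq_zero (h.orthogonal U hU M hM f)
  exact hX (asIso g).symm hX₀

lemma inter_star_eq_of_subset_left (h : IsTorsionPair A T F) (hY : IsoClosed A Y)
    (hYT : Y ⊆ T) : T ∩ star A Y F = Y := by
  refine subset_antisymm ?_ fun M hM => ⟨hYT hM, subset_star_left h.zero_mem_right hM⟩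
  rintro M ⟨hM, ⟨Y₀, V, f, g, hfg, hY₀, hV⟩⟩
  have := hfg.isIso_left_of_right_eq_zero (h.orthogonal M hM V hV g)
  exact hY (asIso f) hY₀

end IsTorsionPair

section Interval

variable {T₁ F₁ T₂ F₂ X Y : Set A}

lemma orthogonal_star (h₁ : IsTorsionPair A T₁ F₁) (h₂ : IsTorsionPair A T₂ F₂)
    (h12 : T₁ ⊆ T₂) (hXY : IsTorsionPairIn A (T₂ ∩ F₁) X Y) :
    Orthogonal A (star A T₁ X) (star A Y F₂) := by
  obtain ⟨hXH, hYH, -, -, hXY, -⟩ := hXY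
  have hT₁Y : Orthogonal A T₁ Y := h₁.orthogonal.mono subset_rfl (hYH.trans Set.inter_subset_right)
  refine (hT₁Y.star_left hXY).star_right (h₂.orthogonal.mono ?_ subset_rfl)
  exact h₂.star_subset_left h12 (hXH.trans Set.inter_subset_left)

lemma exists_isSES_star (h₁ : IsTorsionPair A T₁ F₁) (h₂ : IsTorsionPair A T₂ F₂)
    (hXY : IsTorsionPairIn A (T₂ ∩ F₁) X Y) (M : A) :
    ∃ (B C : A) (f : B ⟶ M) (g : M ⟶ C),
      IsSES A f g ∧ B ∈ star A T₁ X ∧ C ∈ star A Y F₂ := by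
  obtain ⟨-, -, hXc, hYc, -, hdec⟩ := hXY
  obtain ⟨T, V, k, g, hkg, hT, hV⟩ := h₂.exists_isSES M
  obtain ⟨U, W, u, a, hua, hU, hW⟩ := h₁.exists_isSES T
  have := hua.epi
  obtain ⟨X₀, Y₀, m, b, hmb, hX₀, hY₀⟩ := hdec W ⟨h₂.mem_left_of_epi a hT, hW⟩
  have := hmb.epi
  have := hkg.mono
  have hP : kernel (a ≫ b) ∈ star A T₁ X := kernel_comp_mem_star a b
    (hua.kernel_mem h₁.isoClosed_left hU) (hmb.kernel_mem hXc hX₀)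
  have hQ : cokernel (kernel.ι (a ≫ b) ≫ k) ∈ star A Y F₂ := cokernel_comp_mem_star _ k
    ((isSES_kernel (a ≫ b)).cokernel_mem hYc hY₀) (hkg.cokernel_mem h₂.isoClosed_right hV)
  exact ⟨_, _, _, _, isSES_cokernel (kernel.ι (a ≫ b) ≫ k), hP, hQ⟩

lemma isTorsionPair_star (h₁ : IsTorsionPair A T₁ F₁) (h₂ : IsTorsionPair A T₂ F₂)
    (h12 : T₁ ⊆ T₂) (hXY : IsTorsionPairIn A (T₂ ∩ F₁) X Y) :
    IsTorsionPair A (star A T₁ X) (star A Y F₂) :=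
  ⟨isoClosed_star, isoClosed_star, orthogonal_star h₁ h₂ h12 hXY,
    exists_isSES_star h₁ h₂ hXY⟩

end Interval

/-- the bijection for intervals of torsion pairs in an abelian category.
Let `t₁ = (T₁, F₁) ≤ t₂ = (T₂, F₂)` be torsion pairs in `A` and `H = T₂ ∩ F₁`.  Then
`Φ(T, F) = (T ∩ F₁, T₂ ∩ F)` and `Ψ(X, Y) = (T₁ ∗ X, Y ∗ F₂)` are mutually inverse,
order-preserving bijections between the torsion pairs `(T, F)` in `A` with `T₁ ⊆ T ⊆ T₂`
and the torsion pairs in `H`. -/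
theorem stmt13 (T₁ F₁ T₂ F₂ : Set A)
    (h₁ : IsTorsionPair A T₁ F₁) (h₂ : IsTorsionPair A T₂ F₂) (h12 : T₁ ⊆ T₂) :
    -- `Φ` is well defined
    (∀ T F : Set A, IsTorsionPair A T F → T₁ ⊆ T → T ⊆ T₂ →
      IsTorsionPairIn A (T₂ ∩ F₁) (T ∩ F₁) (T₂ ∩ F)) ∧
    -- `Ψ` is well defined
    (∀ X Y : Set A, IsTorsionPairIn A (T₂ ∩ F₁) X Y →
      IsTorsionPair A (star A T₁ X) (star A Y F₂) ∧
        T₁ ⊆ star A T₁ X ∧ star A T₁ X ⊆ T₂) ∧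
    -- `Ψ ∘ Φ = id`
    (∀ T F : Set A, IsTorsionPair A T F → T₁ ⊆ T → T ⊆ T₂ →
      star A T₁ (T ∩ F₁) = T ∧ star A (T₂ ∩ F) F₂ = F) ∧
    -- `Φ ∘ Ψ = id`
    (∀ X Y : Set A, IsTorsionPairIn A (T₂ ∩ F₁) X Y →
      (star A T₁ X) ∩ F₁ = X ∧ T₂ ∩ (star A Y F₂) = Y) ∧
    -- `Φ` is order-preserving
    (∀ T T' : Set A, T ⊆ T' → T ∩ F₁ ⊆ T' ∩ F₁) ∧
    -- `Ψ` is order-preserving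
    (∀ X X' : Set A, X ⊆ X' → star A T₁ X ⊆ star A T₁ X') := by
  refine ⟨fun T F h h₁T hT₂ => h.isTorsionPairIn_inter h₁ h₂ h₁T hT₂, fun X Y hXY => ?_,
    fun T F h h₁T hT₂ => ⟨h.star_inter_eq_left h₁ h₁T, h.star_inter_eq_right h₂ hT₂⟩,
    fun X Y hXY => ?_, fun T T' hT => Set.inter_subset_inter_left _ hT,
    fun X X' hX => star_mono subset_rfl hX⟩
  · have h0X := hXY.zero_mem_left ⟨h₂.zero_mem_left, h₁.zero_mem_right⟩
    exact ⟨isTorsionPair_star h₁ h₂ h12 hXY, subset_star_left h0X,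
      h₂.star_subset_left h12 (hXY.1.trans Set.inter_subset_left)⟩
  · obtain ⟨hXH, hYH, hXc, hYc, -, -⟩ := hXY
    exact ⟨h₁.star_inter_eq_of_subset_right hXc (hXH.trans Set.inter_subset_right),
      h₂.inter_star_eq_of_subset_left hYc (hYH.trans Set.inter_subset_left)⟩
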